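/- Let m ≥ 3, n ≥ 2 and k ≥ 0, and write λ = 2k+1. Let N(m,r) denote the number of proper colorings of the signed book graph B^{uv}(m,r) with color set {−k,…,−1,0,1,…,k}. Then N(m,n) = (λ−1)·γ_{m−1}(λ)·N(m,n−1) + (−1)^m·(λ−1)^2·γ_m(λ)^{n−1}. -/

import Mathlib

/-- Vertices of the book graph `B(m,n)`: `Sum.inl false` is `u`, `Sum.inl true` is `v`,
and `Sum.inr (i, j)` is the vertex `u_{j+1}^{i+1}`. -/
abbrev BookVertex (m n : ℕ) := Bool ⊕ (Fin n × Fin (m - 2))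

/-- Adjacency relation of the book graph `B(m,n)`. -/
def bookAdj (m n : ℕ) : BookVertex m n → BookVertex m n → Prop
  | Sum.inl a, Sum.inl b => a ≠ b
  | Sum.inl false, Sum.inr (_, j) => j.val = 0
  | Sum.inl true, Sum.inr (_, j) => j.val = m - 3
  | Sum.inr (_, j), Sum.inl false => j.val = 0
  | Sum.inr (_, j), Sum.inl true => j.val = m - 3
  | Sum.inr (i, j), Sum.inr (i', j') => i = i' ∧ (j.val + 1 = j'.val ∨ j'.val + 1 = j.val)

/-- The signature `σ_l` of `B(m,n)`: exactly the edges `u u_1^1, …, u u_1^l` are negative. -/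
def sigmaL (m n l : ℕ) : BookVertex m n → BookVertex m n → ℤ
  | Sum.inl false, Sum.inr (i, j) => if j.val = 0 ∧ i.val < l then -1 else 1
  | Sum.inr (i, j), Sum.inl false => if j.val = 0 ∧ i.val < l then -1 else 1
  | _, _ => 1

/-- The signature of `B^{uv}(m,n)`: exactly the edge `uv` is negative. -/
def sigmaUV (m n : ℕ) : BookVertex m n → BookVertex m n → ℤ
  | Sum.inl _, Sum.inl _ => -1
  | _, _ => 1

/-- `γ_m(x) = ∑_{i=0}^{m-2} (-1)^i (x-1)^{m-2-i}`. -/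
def gammaP (m : ℕ) (x : ℤ) : ℤ := ∑ i ∈ Finset.range (m - 1), (-1) ^ i * (x - 1) ^ (m - 2 - i)

/-- The number of proper colorings of the signed book graph `B^{uv}(m,r)` (only the edge
`uv` negative) with color set `{-k, …, -1, 0, 1, …, k}`. -/
noncomputable def NColUV (m r k : ℕ) : ℕ :=
  Nat.card {c : BookVertex m r → ℤ //
    (∀ x, |c x| ≤ (k : ℤ)) ∧
    ∀ x y, bookAdj m r x y → c x ≠ sigmaUV m r x y * c y}


/-!
Fix the colors `a`, `b` of `u` and `v`. As `uv` is negative they must satisfy `a ≠ -b`, and then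
the pages are colored independently, each as a path from `a` to `b` with all edges positive.
Counting walks in the complete graph on `λ` colors, a page has `(λ-1)·γ_{m-1}(λ)` colorings if
`a = b` and `γ_m(λ)` colorings otherwise. In `N(m,n) - (λ-1)·γ_{m-1}(λ)·N(m,n-1)` the pairs with
`a = b` therefore cancel, and each of the `(λ-1)^2` pairs with `a ≠ ±b` leaves
`(γ_m(λ) - (λ-1)·γ_{m-1}(λ))·γ_m(λ)^{n-1} = (-1)^m·γ_m(λ)^{n-1}`.
-/

open Finset

lemma gammaP_two (x : ℤ) : gammaP 2 x = 1 := by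
  simp [gammaP]

lemma gammaP_add_two (ℓ : ℕ) (x : ℤ) :
    gammaP (ℓ + 2) x = (x - 1) * gammaP (ℓ + 1) x + (-1) ^ ℓ := by
  rw [gammaP, gammaP, Nat.add_sub_cancel, show ℓ + 2 - 1 = ℓ + 1 from rfl, sum_range_succ,
    mul_sum, Nat.sub_self, pow_zero, mul_one]
  congr 1
  refine sum_congr rfl fun i hi => ?_
  rw [show ℓ - i = ℓ + 1 - 2 - i + 1 by grind, pow_succ]
  ring

section PathColorings

variable {α : Type*}

/-- `f` colors the `t + 1` inner vertices of a path whose two end vertices have colors `a`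
and `b`. -/
def IsPathColoring {t : ℕ} (a b : α) (f : Fin (t + 1) → α) : Prop :=
  a ≠ f 0 ∧ f (Fin.last t) ≠ b ∧ ∀ j : Fin t, f j.castSucc ≠ f j.succ

instance [DecidableEq α] {t : ℕ} (a b : α) (f : Fin (t + 1) → α) :
    Decidable (IsPathColoring a b f) :=
  inferInstanceAs (Decidable (_ ∧ _ ∧ _))

lemma isPathColoring_zero_iff {a b : α} (f : Fin 1 → α) :
    IsPathColoring a b f ↔ a ≠ f 0 ∧ f 0 ≠ b := by
  simp [IsPathColoring, Fin.last]

lemma isPathColoring_succ_iff {t : ℕ} {a b : α} (f : Fin (t + 2) → α) :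
    IsPathColoring a b f ↔ a ≠ f 0 ∧ IsPathColoring (f 0) b (Fin.tail f) := by
  simp only [IsPathColoring, Fin.forall_fin_succ, Fin.tail, ← Fin.succ_last, ← Fin.succ_castSucc]
  tauto

lemma IsPathColoring.apply_ne_of_val_add_one_eq {t : ℕ} {a b : α} {f : Fin (t + 1) → α}
    (hf : IsPathColoring a b f) {j j' : Fin (t + 1)} (h : j.val + 1 = j'.val) : f j ≠ f j' := by
  obtain ⟨i, rfl⟩ : ∃ i : Fin t, i.castSucc = j := ⟨⟨j, by omega⟩, rfl⟩
  obtain rfl : j' = i.succ := Fin.ext (by simp [← h])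
  exact hf.2.2 i

variable [DecidableEq α]

def pathColorings (S : Finset α) (t : ℕ) (a b : α) : Finset (Fin (t + 1) → α) :=
  {f ∈ Fintype.piFinset fun _ => S | IsPathColoring a b f}

lemma card_pathColorings_zero (S : Finset α) (a b : α) :
    #(pathColorings S 0 a b) = #((S.erase a).erase b) := by
  refine card_nbij' (· 0) (fun x _ => x) (fun f hf => ?_) (fun x hx => ?_) (fun f _ => ?_)
    (fun _ _ => rfl)
  · simp_all [pathColorings, isPathColoring_zero_iff, Ne.symm]
  · simp_all [pathColorings, isPathColoring_zero_iff, Ne.symm]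
  · funext i; rw [Fin.fin_one_eq_zero i]

lemma card_pathColorings_succ (S : Finset α) (t : ℕ) (a b : α) :
    #(pathColorings S (t + 1) a b) = ∑ c ∈ S.erase a, #(pathColorings S t c b) := by
  have mem_iff (f : Fin (t + 2) → α) : f ∈ pathColorings S (t + 1) a b ↔
      f 0 ∈ S.erase a ∧ Fin.tail f ∈ pathColorings S t (f 0) b := by
    simp only [pathColorings, mem_filter, Fin.mem_piFinset_iff_zero_tail, isPathColoring_succ_iff,
      mem_erase]
    tauto
  rw [card_eq_sum_card_fiberwise fun f hf => ((mem_iff f).1 hf).1]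
  refine sum_congr rfl fun c hc => card_nbij' Fin.tail (Fin.cons c : _ → Fin (t + 2) → α)
    (fun f hf => ?_) (fun g hg => ?_) (fun f hf => ?_)
    (fun g _ => Fin.tail_cons (α := fun _ => α) c g)
  · obtain ⟨hmem, rfl⟩ := mem_filter.1 (mem_coe.1 hf)
    exact ((mem_iff f).1 hmem).2
  · simp only [coe_filter, Set.mem_ofPred_eq, mem_iff, Fin.cons_zero, Fin.tail_cons, and_true]
    exact ⟨hc, hg⟩
  · obtain ⟨-, rfl⟩ := mem_filter.1 hf
    exact Fin.cons_self_tail f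

lemma card_pathColorings {S : Finset α} {b : α} (hb : b ∈ S) (t : ℕ) {a : α} (ha : a ∈ S) :
    (#(pathColorings S t a b) : ℤ) =
      if a = b then (#S - 1) * gammaP (t + 2) #S else gammaP (t + 3) #S := by
  induction t generalizing a with
  | zero =>
    rw [card_pathColorings_zero]
    split_ifs with hab
    · rw [hab, erase_idem, cast_card_erase_of_mem hb, gammaP_two, mul_one]
    · rw [cast_card_erase_of_mem (mem_erase.2 ⟨Ne.symm hab, hb⟩), cast_card_erase_of_mem ha,
        gammaP_add_two, gammaP_two]
      ring
  | succ t ih =>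
    rw [card_pathColorings_succ, Nat.cast_sum, sum_congr rfl fun c hc => ih (mem_of_mem_erase hc),
      sum_ite, filter_eq', filter_ne', sum_const, sum_const]
    by_cases hab : a = b
    · subst hab
      rw [if_neg (notMem_erase a S), if_pos rfl, erase_idem, card_empty, zero_smul, zero_add,
        nsmul_eq_mul, cast_card_erase_of_mem ha]
    · rw [if_pos (mem_erase.2 ⟨Ne.symm hab, hb⟩), if_neg hab, card_singleton, one_smul,
        nsmul_eq_mul, cast_card_erase_of_mem (mem_erase.2 ⟨Ne.symm hab, hb⟩),
        cast_card_erase_of_mem ha, gammaP_add_two (t + 2), gammaP_add_two (t + 1)]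
      ring

end PathColorings

lemma bookColoring_proper_iff {t r : ℕ} (c : BookVertex (t + 3) r → ℤ) :
    (∀ x y, bookAdj (t + 3) r x y → c x ≠ sigmaUV (t + 3) r x y * c y) ↔
      c (.inl false) ≠ -c (.inl true) ∧
        ∀ i, IsPathColoring (c (.inl false)) (c (.inl true)) fun j => c (.inr (i, j)) := by
  constructor
  · intro h
    refine ⟨by simpa [sigmaUV] using h (.inl false) (.inl true) Bool.false_ne_true, fun i => ?_⟩
    refine ⟨by simpa [sigmaUV] using h (.inl false) (.inr (i, (0 : Fin (t + 1)))) rfl,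
      by simpa [sigmaUV] using h (.inr (i, Fin.last t)) (.inl true) rfl, fun j => ?_⟩
    simpa [sigmaUV] using h (.inr (i, j.castSucc)) (.inr (i, j.succ)) ⟨rfl, .inl rfl⟩
  · rintro ⟨huv, hpage⟩ ((_ | _) | ⟨i, j⟩) ((_ | _) | ⟨i', j'⟩) hxy
    all_goals simp [bookAdj, sigmaUV] at hxy ⊢
    · exact huv
    · obtain rfl : j' = (0 : Fin (t + 1)) := Fin.ext hxy
      exact (hpage i').1
    · grind
    · obtain rfl : j' = Fin.last t := Fin.ext hxy
      exact (hpage i').2.1.symm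
    · obtain rfl : j = (0 : Fin (t + 1)) := Fin.ext hxy
      exact (hpage i).1.symm
    · obtain rfl : j = Fin.last t := Fin.ext hxy
      exact (hpage i).2.1
    · obtain ⟨rfl, h | h⟩ := hxy
      · exact (hpage i).apply_ne_of_val_add_one_eq h
      · exact ((hpage i).apply_ne_of_val_add_one_eq h).symm

def bookColoringEquiv (S : Finset ℤ) (t r : ℕ) :
    {c : BookVertex (t + 3) r → ℤ //
      (∀ x, c x ∈ S) ∧ ∀ x y, bookAdj (t + 3) r x y → c x ≠ sigmaUV (t + 3) r x y * c y} ≃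
      Σ p : {p ∈ S ×ˢ S | p.1 ≠ -p.2}, Fin r → pathColorings S t p.1.1 p.1.2 where
  toFun c :=
    have hc := (bookColoring_proper_iff c.1).1 c.2.2
    ⟨⟨(c.1 (.inl false), c.1 (.inl true)), mem_filter.2 ⟨mem_product.2 ⟨c.2.1 _, c.2.1 _⟩, hc.1⟩⟩,
      fun i => ⟨fun j => c.1 (.inr (i, j)),
        mem_filter.2 ⟨Fintype.mem_piFinset.2 fun _ => c.2.1 _, hc.2 i⟩⟩⟩
  invFun pg :=
    ⟨Sum.elim (fun s => bif s then pg.1.1.2 else pg.1.1.1) fun q => (pg.2 q.1).1 q.2,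
      by
        refine ⟨?_, (bookColoring_proper_iff _).2
          ⟨(mem_filter.1 pg.1.2).2, fun i => (mem_filter.1 (pg.2 i).2).2⟩⟩
        have hp := mem_product.1 (mem_filter.1 pg.1.2).1
        rintro ((_ | _) | ⟨i, j⟩)
        · exact hp.1
        · exact hp.2
        · exact Fintype.mem_piFinset.1 (mem_filter.1 (pg.2 i).2).1 j⟩
  left_inv c := Subtype.ext <| funext fun x => by rcases x with (_ | _) | _ <;> rfl
  right_inv _ := rfl

lemma natCard_bookColorings (S : Finset ℤ) (t r : ℕ) :
    Nat.card {c : BookVertex (t + 3) r → ℤ //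
      (∀ x, c x ∈ S) ∧ ∀ x y, bookAdj (t + 3) r x y → c x ≠ sigmaUV (t + 3) r x y * c y} =
      ∑ p ∈ S ×ˢ S with p.1 ≠ -p.2, #(pathColorings S t p.1 p.2) ^ r := by
  rw [Nat.card_congr (bookColoringEquiv S t r), Nat.card_sigma]
  simp only [Nat.card_fun, Nat.card_eq_finsetCard, Nat.card_fin]
  exact sum_coe_sort _ (fun p : ℤ × ℤ => #(pathColorings S t p.1 p.2) ^ r)

lemma cast_card_Icc_neg_self (k : ℕ) : (#(Icc (-k : ℤ) k) : ℤ) = 2 * k + 1 := by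
  rw [Int.card_Icc]
  omega

lemma cast_card_filter_ne_neg_ne (k : ℕ) {a : ℤ} (ha : a ∈ Icc (-k : ℤ) k) :
    (#{b ∈ Icc (-k : ℤ) k | a ≠ -b ∧ a ≠ b} : ℤ) = 2 * k - 1 + if a = 0 then 1 else 0 := by
  have hna : -a ∈ Icc (-k : ℤ) k := by grind
  rw [show {b ∈ Icc (-k : ℤ) k | a ≠ -b ∧ a ≠ b} = ((Icc (-k : ℤ) k).erase a).erase (-a) by
    ext b; simp only [mem_filter, mem_erase]; grind]
  by_cases ha0 : a = 0
  · subst ha0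
    rw [neg_zero, erase_idem, cast_card_erase_of_mem ha, cast_card_Icc_neg_self, if_pos rfl]
    ring
  · rw [cast_card_erase_of_mem (mem_erase.2 ⟨by omega, hna⟩), cast_card_erase_of_mem ha,
      cast_card_Icc_neg_self, if_neg ha0]
    ring

lemma cast_card_filter_ne_neg_ne_product (k : ℕ) :
    (#{p ∈ Icc (-k : ℤ) k ×ˢ Icc (-k : ℤ) k | p.1 ≠ -p.2 ∧ p.1 ≠ p.2} : ℤ) = (2 * k) ^ 2 := by
  rw [card_filter, sum_product]
  simp_rw [← card_filter]
  push_cast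
  rw [sum_congr rfl fun a ha => cast_card_filter_ne_neg_ne k ha, sum_add_distrib, sum_const,
    sum_ite_eq' _ _ (fun _ => (1 : ℤ)), if_pos (by simp), nsmul_eq_mul, cast_card_Icc_neg_self]
  ring

lemma NColUV_eq_sum (t r k : ℕ) :
    (NColUV (t + 3) r k : ℤ) = ∑ p ∈ Icc (-k : ℤ) k ×ˢ Icc (-k : ℤ) k with p.1 ≠ -p.2,
      (if p.1 = p.2 then 2 * k * gammaP (t + 2) (2 * k + 1)
        else gammaP (t + 3) (2 * k + 1)) ^ r := by
  have hS (c : BookVertex (t + 3) r → ℤ) : (∀ x, |c x| ≤ k) ↔ ∀ x, c x ∈ Icc (-k : ℤ) k := by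
    simp only [mem_Icc, abs_le]
  rw [NColUV, Nat.card_congr (Equiv.subtypeEquivRight fun c => and_congr_left' (hS c)),
    natCard_bookColorings, Nat.cast_sum]
  refine sum_congr rfl fun p hp => ?_
  obtain ⟨ha, hb⟩ := mem_product.1 (mem_filter.1 hp).1
  rw [Nat.cast_pow, card_pathColorings hb t ha, cast_card_Icc_neg_self, add_sub_cancel_right]

/-- Recursion for the chromatic polynomial of `B^{uv}(m,n)`, with `λ = 2k+1`:
`N(m,n) = (λ-1)·γ_{m-1}(λ)·N(m,n-1) + (-1)^m·(λ-1)^2·γ_m(λ)^{n-1}`. -/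
theorem statement11 (m n : ℕ) (hm : 3 ≤ m) (hn : 2 ≤ n) (k : ℕ) :
    (NColUV m n k : ℤ) =
      ((2 * (k : ℤ) + 1) - 1) * gammaP (m - 1) (2 * (k : ℤ) + 1) * (NColUV m (n - 1) k : ℤ) +
        (-1) ^ m * ((2 * (k : ℤ) + 1) - 1) ^ 2 * gammaP m (2 * (k : ℤ) + 1) ^ (n - 1) := by
  obtain ⟨t, rfl⟩ : ∃ t, m = t + 3 := ⟨m - 3, by omega⟩
  obtain ⟨r, rfl⟩ : ∃ r, n = r + 1 := ⟨n - 1, by omega⟩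
  have hPQ : gammaP (t + 3) (2 * k + 1) - 2 * k * gammaP (t + 2) (2 * k + 1) = (-1) ^ (t + 3) := by
    rw [gammaP_add_two (t + 1)]
    ring
  set Q := 2 * (k : ℤ) * gammaP (t + 2) (2 * k + 1)
  set P := gammaP (t + 3) (2 * (k : ℤ) + 1)
  have hterm (p : ℤ × ℤ) :
      (if p.1 = p.2 then Q else P) ^ (r + 1) - Q * (if p.1 = p.2 then Q else P) ^ r =
        if p.1 ≠ p.2 then (-1) ^ (t + 3) * P ^ r else 0 := by
    by_cases h : p.1 = p.2
    · rw [if_pos h, if_neg (not_not.2 h)]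
      ring
    · rw [if_neg h, if_pos h, ← hPQ]
      ring
  simp only [add_sub_cancel_right, Nat.add_sub_cancel, show t + 3 - 1 = t + 2 from rfl]
  rw [← sub_eq_iff_eq_add', NColUV_eq_sum, NColUV_eq_sum, mul_sum, ← sum_sub_distrib,
    sum_congr rfl fun p _ => hterm p, ← sum_filter, filter_filter, sum_const, nsmul_eq_mul,
    cast_card_filter_ne_neg_ne_product]
  ring
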